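/- For every positive integer $n$, the derivative of the Riemann zeta function at the trivial zero $-2n$ is given by $$\zeta'(-2n) = \frac{(-1)^{n}\,\zeta(2n+1)\,(2n)!}{2\,(2\pi)^{2n}}.$$ -/

import Mathlib

/-!
For `1 < Re s` the functional equation `ζ(1 - s) = 2 (2π)^(-s) Γ(s) cos(πs/2) ζ(s)` holds on a
neighbourhood of `s`, where `Γ` and `ζ` are continuous. At `s = 2n + 1` the cosine vanishes, so
differentiating the product only the derivative `-(π/2) sin(πs/2) = -(π/2) (-1)^n` of the cosine
survives, and `Γ(2n + 1) = (2n)!`.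
-/

open Complex Real

open Topology

theorem HasDerivAt.continuousAt_mul_of_eq_zero {𝕜 : Type*} [NontriviallyNormedField 𝕜]
    {u c : 𝕜 → 𝕜} {x c' : 𝕜} (hc : HasDerivAt c c' x) (h0 : c x = 0) (hu : ContinuousAt u x) :
    HasDerivAt (fun y => u y * c y) (u x * c') x := by
  rw [hasDerivAt_iff_tendsto_slope] at hc ⊢
  have hslope : slope (fun y => u y * c y) x = fun y => u y * slope c x y := by
    ext y
    simp only [slope_def_field, h0, mul_zero, sub_zero, mul_div_assoc]
  rw [hslope]
  exact (hu.tendsto.mono_left nhdsWithin_le_nhds).mul hc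

namespace Complex

theorem cos_pi_mul_odd_div_two (n : ℕ) : cos (π * (2 * n + 1) / 2) = 0 := by
  rw [show (π * (2 * n + 1) / 2 : ℂ) = n * π + π / 2 by ring, cos_add_pi_div_two, sin_nat_mul_pi,
    neg_zero]

theorem sin_pi_mul_odd_div_two (n : ℕ) : sin (π * (2 * n + 1) / 2) = (-1) ^ n := by
  rw [show (π * (2 * n + 1) / 2 : ℂ) = ((n * π + π / 2 : ℝ) : ℂ) by push_cast; ring,
    ← ofReal_sin, Real.sin_add_pi_div_two, Real.cos_nat_mul_pi]
  norm_cast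

theorem ne_neg_natCast_of_re_pos {s : ℂ} (hs : 0 < s.re) (m : ℕ) : s ≠ -m := by
  rintro rfl
  simp only [neg_re, natCast_re, Left.neg_pos_iff] at hs
  linarith [(m.cast_nonneg : (0 : ℝ) ≤ m)]

end Complex

theorem riemannZeta_one_sub_of_one_lt_re {s : ℂ} (hs : 1 < s.re) :
    riemannZeta (1 - s) =
      2 * (2 * π) ^ (-s) * Complex.Gamma s * cos (π * s / 2) * riemannZeta s := by
  refine riemannZeta_one_sub (ne_neg_natCast_of_re_pos (by linarith)) fun h => ?_
  simp [h] at hs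

theorem deriv_riemannZeta_one_sub_of_cos_eq_zero {s : ℂ} (hs : 1 < s.re)
    (hcos : cos (π * s / 2) = 0) :
    deriv riemannZeta (1 - s) =
      π * (2 * π) ^ (-s) * Complex.Gamma s * sin (π * s / 2) * riemannZeta s := by
  have hζ : ContinuousAt riemannZeta s :=
    (differentiableAt_riemannZeta fun h => by simp [h] at hs).continuousAt
  have hΓ : ContinuousAt Complex.Gamma s :=
    (differentiableAt_Gamma s (ne_neg_natCast_of_re_pos (by linarith))).continuousAt
  have hfactor : ContinuousAt
      (fun z : ℂ => 2 * (2 * π : ℂ) ^ (-z) * Complex.Gamma z * riemannZeta z) s := by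
    have hpow : ContinuousAt (fun z : ℂ => (2 * π : ℂ) ^ (-z)) s :=
      continuousAt_id.neg.const_cpow (Or.inl (by simp [Real.pi_ne_zero]))
    exact ((continuousAt_const.mul hpow).mul hΓ).mul hζ
  have hcos' : HasDerivAt (fun z : ℂ => cos (π * z / 2)) (-sin (π * s / 2) * (π / 2)) s := by
    simpa using (((hasDerivAt_id s).const_mul (π : ℂ)).div_const 2).ccos
  have heq : (fun z => riemannZeta (1 - z)) =ᶠ[𝓝 s] fun z =>
      2 * (2 * π) ^ (-z) * Complex.Gamma z * riemannZeta z * cos (π * z / 2) := by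
    filter_upwards [(isOpen_lt continuous_const continuous_re).mem_nhds hs] with z hz
    rw [riemannZeta_one_sub_of_one_lt_re hz]
    ring
  have := heq.deriv_eq.trans (hcos'.continuousAt_mul_of_eq_zero hcos hfactor).deriv
  rw [deriv_comp_const_sub] at this
  linear_combination -this

/-- The derivative of the Riemann zeta function at the trivial zero `-2n`:
`ζ'(-2n) = (-1)^n ζ(2n+1) (2n)! / (2 (2π)^(2n))`. -/
theorem deriv_riemannZeta_neg_two_mul (n : ℕ) (hn : 0 < n) :
    deriv riemannZeta (-2 * n) =
      ((-1) ^ n * riemannZeta (2 * n + 1) * (2 * n).factorial) / (2 * (2 * π) ^ (2 * n)) := by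
  have hs : 1 < (2 * n + 1 : ℂ).re := by simpa using hn
  have hΓ : Complex.Gamma (2 * n + 1) = (2 * n).factorial := by
    exact_mod_cast Complex.Gamma_nat_eq_factorial (2 * n)
  have hpow : (2 * π : ℂ) ^ (-(2 * n + 1 : ℂ)) = ((2 * π : ℂ) ^ (2 * n + 1))⁻¹ := by
    rw [cpow_neg]
    norm_cast
  have h := deriv_riemannZeta_one_sub_of_cos_eq_zero hs (cos_pi_mul_odd_div_two n)
  rw [show 1 - (2 * n + 1 : ℂ) = -2 * n by ring, sin_pi_mul_odd_div_two, hΓ, hpow] at h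
  rw [h]
  have hπ : (π : ℂ) ≠ 0 := by exact_mod_cast Real.pi_ne_zero
  field_simp
  ring
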